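/- For every real eccentricity e with 0 < e < 1, ∫₀^{2π} sin²E/(1 − e·cos E)² dE = (2π/e²)·(1/√(1 − e²) − 1). -/

import Mathlib

/-!
Since `sin² E = 1 - cos² E`, the integrand equals
`ν'(E) / (e² √(1 - e²)) - 1 / e² - (1 / e) · d/dE [sin E / (1 - e cos E)]`, where `ν` is the true
anomaly, with `dν/dE = √(1 - e²) / (1 - e cos E)`. In the closed form below `ν` is smooth on all
of `ℝ` with `ν(2π) = 2π`, so the fundamental theorem of calculus applies over the whole period.
-/

open Real

theorem hasDerivAt_add_two_mul_arctan {b x : ℝ} (h : 1 - b * cos x ≠ 0) :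
    HasDerivAt (fun y => y + 2 * arctan (b * sin y / (1 - b * cos y)))
      ((1 - b ^ 2) / (1 + b ^ 2 - 2 * b * cos x)) x := by
  have hpos : 0 < 1 + b ^ 2 - 2 * b * cos x := by
    have : 0 < (1 - b * cos x) ^ 2 := by positivity
    nlinarith [sin_sq_add_cos_sq x, sq_nonneg (b * sin x)]
  have hquot : HasDerivAt (fun y => b * sin y / (1 - b * cos y))
      ((b * cos x * (1 - b * cos x) - b * sin x * (b * sin x)) / (1 - b * cos x) ^ 2) x :=
    ((hasDerivAt_sin x).const_mul b).div
      (((hasDerivAt_cos x).const_mul b).const_sub 1 |>.congr_deriv (by ring)) h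
  refine ((hasDerivAt_id x).add ((hasDerivAt_arctan _).comp x hquot |>.const_mul 2)).congr_deriv ?_
  field_simp
  rw [sin_sq x]
  ring

theorem one_sub_sq_div_one_add_sq_sub_two_mul {e s : ℝ} (c : ℝ) (hs0 : 0 ≤ s)
    (hs : s ^ 2 = 1 - e ^ 2) :
    (1 - (e / (1 + s)) ^ 2) / (1 + (e / (1 + s)) ^ 2 - 2 * (e / (1 + s)) * c) =
      s / (1 - e * c) := by
  have h1s : 1 + s ≠ 0 := by positivity
  have hden : 1 + (e / (1 + s)) ^ 2 - 2 * (e / (1 + s)) * c = 2 * (1 - e * c) / (1 + s) := by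
    field_simp
    linear_combination hs
  have hnum : 1 - (e / (1 + s)) ^ 2 = 2 * s / (1 + s) := by
    field_simp
    linear_combination -hs
  rw [hden, hnum, div_div_div_cancel_right₀ h1s, mul_div_mul_left _ _ two_ne_zero]

theorem one_sub_mul_cos_pos {e : ℝ} (he : |e| < 1) (x : ℝ) : 0 < 1 - e * cos x := by
  have : |e * cos x| < 1 := by
    rw [abs_mul]
    exact lt_of_le_of_lt (mul_le_of_le_one_right (abs_nonneg e) (abs_cos_le_one x)) he
  linarith [le_abs_self (e * cos x)]

/-- The branch of `2 arctan (√((1 + e) / (1 - e)) tan (E / 2))` that is continuous in `E`. -/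
noncomputable def trueAnomaly (e E : ℝ) : ℝ :=
  E + 2 * arctan (e / (1 + √(1 - e ^ 2)) * sin E / (1 - e / (1 + √(1 - e ^ 2)) * cos E))

theorem trueAnomaly_zero (e : ℝ) : trueAnomaly e 0 = 0 := by
  simp [trueAnomaly]

theorem trueAnomaly_two_pi (e : ℝ) : trueAnomaly e (2 * π) = 2 * π := by
  simp [trueAnomaly]

theorem hasDerivAt_trueAnomaly {e : ℝ} (he : |e| < 1) (x : ℝ) :
    HasDerivAt (trueAnomaly e) (√(1 - e ^ 2) / (1 - e * cos x)) x := by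
  have hs : √(1 - e ^ 2) ^ 2 = 1 - e ^ 2 :=
    sq_sqrt (by nlinarith [sq_abs e, abs_nonneg e])
  have hβ : |e / (1 + √(1 - e ^ 2))| < 1 := by
    rw [abs_div, abs_of_pos (by positivity : 0 < 1 + √(1 - e ^ 2)), div_lt_one (by positivity)]
    linarith [sqrt_nonneg (1 - e ^ 2)]
  have := hasDerivAt_add_two_mul_arctan (one_sub_mul_cos_pos hβ x).ne'
  rwa [one_sub_sq_div_one_add_sq_sub_two_mul _ (sqrt_nonneg _) hs] at this

theorem hasDerivAt_sin_div_one_sub_mul_cos {e x : ℝ} (h : 1 - e * cos x ≠ 0) :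
    HasDerivAt (fun y => sin y / (1 - e * cos y)) ((cos x - e) / (1 - e * cos x) ^ 2) x := by
  refine ((hasDerivAt_sin x).div
    (((hasDerivAt_cos x).const_mul e).const_sub 1) h).congr_deriv ?_
  congr 1
  linear_combination -e * sin_sq_add_cos_sq x

theorem hasDerivAt_sin_sq_div_one_sub_mul_cos_sq_primitive {e : ℝ} (he0 : e ≠ 0)
    (he : |e| < 1) (x : ℝ) :
    HasDerivAt
      (fun E => trueAnomaly e E / (e ^ 2 * √(1 - e ^ 2)) - sin E / (1 - e * cos E) / e - E / e ^ 2)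
      (sin x ^ 2 / (1 - e * cos x) ^ 2) x := by
  have hc := (one_sub_mul_cos_pos he x).ne'
  have hs : √(1 - e ^ 2) ≠ 0 := (sqrt_pos.2 (by nlinarith [sq_abs e, abs_nonneg e])).ne'
  refine ((((hasDerivAt_trueAnomaly he x).div_const _).sub
    ((hasDerivAt_sin_div_one_sub_mul_cos hc).div_const e)).sub
      ((hasDerivAt_id x).div_const _)).congr_deriv ?_
  field_simp
  rw [sin_sq x]
  ring

/-- For every real eccentricity `e` with `0 < e < 1`,
`∫₀^{2π} sin²E/(1 − e·cos E)² dE = (2π/e²)·(1/√(1 − e²) − 1)`. -/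
theorem kepler_average_sin_sq_over_radial_factor_sq (e : ℝ) (he0 : 0 < e) (he1 : e < 1) :
    ∫ E in (0:ℝ)..(2 * π), Real.sin E ^ 2 / (1 - e * Real.cos E) ^ 2 =
      (2 * π / e ^ 2) * (1 / Real.sqrt (1 - e ^ 2) - 1) := by
  have he : |e| < 1 := abs_lt.2 ⟨by linarith, he1⟩
  have hcont : Continuous fun x => sin x ^ 2 / (1 - e * cos x) ^ 2 :=
    Continuous.div (by fun_prop) (by fun_prop) fun x => (pow_pos (one_sub_mul_cos_pos he x) 2).ne'
  rw [intervalIntegral.integral_eq_sub_of_hasDerivAt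
    (fun x _ => hasDerivAt_sin_sq_div_one_sub_mul_cos_sq_primitive he0.ne' he x)
    (hcont.intervalIntegrable _ _), trueAnomaly_two_pi, trueAnomaly_zero]
  simp only [sin_two_pi, sin_zero, zero_div, sub_zero]
  field_simp
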